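/- arXiv:2512.01138 — 13 statements merged into one kernel-verified Lean document; each statement's English description precedes it below -/
import Mathlib

section
/- Let V be a finite nonempty set and let f, g : V → V be arbitrary functions. Then there exists v ∈ V such that f(f(g(v))) ≠ f(v) or f(g(v)) = v. (Totality of the Nephew search problem.) -/
/-!
If no `v` were a solution, then `f (f (g v)) = f v` for all `v` says that `f` maps the finite set
`range f` onto itself, hence injectively. Applied to `f v` and `f (g (f v))`, both in `range f`,
this gives `f (g (f v)) = f v`, so `f v` is a solution after all.
-/

def NephewSol {V : Type*} (f g : V → V) (v : V) : Prop :=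
  f (f (g v)) ≠ f v ∨ f (g v) = v

open Set

theorem injOn_range_of_forall_apply_apply_eq {V : Type*} [Finite V] {f g : V → V}
    (h : ∀ v, f (f (g v)) = f v) : InjOn f (range f) := by
  have hsurj : SurjOn f (range f) (range f) := by
    rintro _ ⟨v, rfl⟩
    exact ⟨f (g v), mem_range_self _, h v⟩
  exact ((toFinite _).surjOn_iff_bijOn_of_mapsTo (fun _ _ ↦ mem_range_self _)).mp hsurj |>.injOn

/-- **Totality of the Nephew search problem.** On any finite nonempty set `V`,
for arbitrary `f g : V → V` there is a Nephew solution. -/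
theorem nephew_total {V : Type*} [Finite V] [Nonempty V] (f g : V → V) :
    ∃ v : V, NephewSol f g v := by
  by_contra! hnone
  simp only [NephewSol, not_or, not_not] at hnone
  obtain ⟨v⟩ := ‹Nonempty V›
  have hinj := injOn_range_of_forall_apply_apply_eq fun w ↦ (hnone w).1
  exact (hnone (f v)).2 (hinj (mem_range_self _) (mem_range_self _) (hnone (f v)).1)
end

section
/- Let V be a finite type with a distinguished element r and let F, L, R : V → V. Then L(r) = r, or R(r) = r, or there exists u ∈ V such that F(L(u)) ≠ u, or F(R(u)) ≠ u, or (L(u) = R(u) and L(u) ≠ u). (Totality of the Empty-Child′ search problem; in particular the Empty-Child problem, whose solutions additionally allow the witness F(r) ≠ r, is also total.) -/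
/-! If no vertex has an empty child, then `F ∘ L = id`, so `F` is surjective and hence, `V` being
finite, injective. Since also `F (R r) = r = F (L r)`, this forces `L r = R r`, and the absence of
an empty child at `r` then gives `L r = r`. -/

open Function

theorem Function.LeftInverse.injective_of_finite {α : Type*} [Finite α] {f g : α → α}
    (h : LeftInverse f g) : Injective f :=
  Finite.injective_iff_surjective.mpr h.surjective

/-- **Totality of the Empty-Child′ search problem.** On a finite type `V` with a
distinguished root `r` and functions `F L R : V → V`, either `L r = r`, or `R r = r`,
or some vertex `u` has an "empty child": `F (L u) ≠ u`, or `F (R u) ≠ u`, or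
`L u = R u` with `L u ≠ u`. -/
theorem emptyChild'_total {V : Type*} [Finite V] (r : V) (F L R : V → V) :
    L r = r ∨ R r = r ∨
      ∃ u : V, F (L u) ≠ u ∨ F (R u) ≠ u ∨ (L u = R u ∧ L u ≠ u) := by
  by_contra! h
  obtain ⟨hLr, -, noEmptyChild⟩ := h
  have hFL : LeftInverse F L := fun u => (noEmptyChild u).1
  have hLR : L r = R r := hFL.injective_of_finite (by rw [hFL r, (noEmptyChild r).2.1])
  exact hLr ((noEmptyChild r).2.2 hLR)
end

section
/- Let V be a set with a distinguished element r, let F, L, R : V → V, and let ℓ ∈ ℕ. For a string x = (x_1, …, x_{ℓ+1}) ∈ {0,1}^{ℓ+1} define down(x) ∈ V by v_0 := r, and for i = 1, …, ℓ+1, v_i := L(v_{i−1}) if x_i = 0 and v_i := R(v_{i−1}) if x_i = 1; set down(x) := v_{ℓ+1}. For v ∈ V define up(v) ∈ {0,1}^{ℓ+1} by u_{ℓ+1} := v and, for i = ℓ+1 down to 1: y_i := 0 if u_i = L(F(u_i)) and y_i := 1 otherwise, and u_{i−1} := F(u_i); set up(v) := (y_1, …, y_{ℓ+1}). If there exists x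 ∈ {0,1}^{ℓ+1} with up(down(x)) ≠ x, then L(r) = r, or R(r) = r, or some u ∈ V has an empty child. -/
/-- Walk down from `v` following the direction string `x`
(`false` means go to the left child `L`, `true` to the right child `R`). -/
def downWalk {V : Type*} (L R : V → V) : V → List Bool → V
  | v, [] => v
  | v, b :: p => downWalk L R (if b then R v else L v) p

open Classical in
/-- Walk up `k` steps from `v` via the father function `F`, recording at each step
`false` if the current vertex is the left child of its father and `true` otherwise;
the resulting string is listed from top to bottom. -/
noncomputable def upWalk {V : Type*} (F L : V → V) : V → ℕ → List Bool
  | _, 0 => []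
  | v, k + 1 => upWalk F L (F v) k ++ [if v = L (F v) then false else true]

/-! Suppose `L r ≠ r` and no vertex has an empty child. Then `F` undoes both `L` and `R`, and
the two children of every vertex on a downward walk from `r` are distinct: a vertex `c`
with `L c = R c` must satisfy `L c = c`, hence `c = F (L c) = F c` is its own father, so the
property propagates down from `r`, where `L r = R r` would force `L r = r`. Hence at every step of the upward walk the recorded bit is the
direction that was taken, and `up (down x) = x`. -/

section ChildFather

variable {V : Type*} {F L R : V → V}

theorem downWalk_append_singleton (v : V) (x : List Bool) (b : Bool) :
    downWalk L R v (x ++ [b]) =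
      if b then R (downWalk L R v x) else L (downWalk L R v x) := by
  induction x generalizing v with
  | nil => rfl
  | cons c p ih => exact ih _

theorem father_child (hFL : ∀ u, F (L u) = u) (hFR : ∀ u, F (R u) = u) (v : V) (b : Bool) :
    F (if b then R v else L v) = v := by
  cases b
  · exact hFL v
  · exact hFR v

theorem left_ne_right_of_father_eq (hFL : ∀ u, F (L u) = u)
    (hLR : ∀ u, L u = R u → L u = u) {v c : V} (hc : F c = v) (hv : L v ≠ R v) :
    L c ≠ R c := by
  intro hcLR
  have hcv : c = v := by
    calc c = F (L c) := (hFL c).symm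
      _ = F c := by rw [hLR c hcLR]
      _ = v := hc
  exact hv (hcv ▸ hcLR)

theorem left_ne_right_downWalk (hFL : ∀ u, F (L u) = u) (hFR : ∀ u, F (R u) = u)
    (hLR : ∀ u, L u = R u → L u = u) {v : V} (hv : L v ≠ R v) (x : List Bool) :
    L (downWalk L R v x) ≠ R (downWalk L R v x) := by
  induction x generalizing v with
  | nil => exact hv
  | cons b p ih =>
    exact ih (left_ne_right_of_father_eq hFL hLR (father_child hFL hFR v b) hv)

theorem upWalk_child (hFL : ∀ u, F (L u) = u) (hFR : ∀ u, F (R u) = u) {w : V}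
    (hw : L w ≠ R w) (k : ℕ) (b : Bool) :
    upWalk F L (if b then R w else L w) (k + 1) = upWalk F L w k ++ [b] := by
  rw [upWalk, father_child hFL hFR]
  cases b
  · simp
  · simpa using hw.symm

theorem upWalk_downWalk (hFL : ∀ u, F (L u) = u) (hFR : ∀ u, F (R u) = u)
    (hLR : ∀ u, L u = R u → L u = u) {v : V} (hv : L v ≠ R v) (x : List Bool) :
    upWalk F L (downWalk L R v x) x.length = x := by
  induction x using List.reverseRecOn with
  | nil => rfl
  | append_singleton p b ih =>
    rw [downWalk_append_singleton, List.length_append, List.length_singleton,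
      upWalk_child hFL hFR (left_ne_right_downWalk hFL hFR hLR hv p), ih]

end ChildFather

/-- **Correctness of the reduction from Empty-Child′ to Lossy-Code.**
If some direction string `x` of length `ℓ + 1` satisfies `up (down x) ≠ x`, then
`L r = r`, or `R r = r`, or some vertex has an empty child. -/
theorem emptyChild'_to_lossyCode {V : Type*} (r : V) (F L R : V → V) (ℓ : ℕ)
    (h : ∃ x : List Bool, x.length = ℓ + 1 ∧
      upWalk F L (downWalk L R r x) (ℓ + 1) ≠ x) :
    L r = r ∨ R r = r ∨
      ∃ u : V, F (L u) ≠ u ∨ F (R u) ≠ u ∨ (L u = R u ∧ L u ≠ u) := by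
  by_contra! hc
  obtain ⟨hLr, -, hchild⟩ := hc
  obtain ⟨x, hx, hne⟩ := h
  have hFL : ∀ u, F (L u) = u := fun u => (hchild u).1
  have hFR : ∀ u, F (R u) = u := fun u => (hchild u).2.1
  have hLR : ∀ u, L u = R u → L u = u := fun u => (hchild u).2.2
  have hr : L r ≠ R r := fun h => hLr (hLR r h)
  exact hne (hx ▸ upWalk_downWalk hFL hFR hLR hr x)
end

section
/- Let V be a set and f, g : V → V. Suppose v ∈ V is such that none of v, g(v), f(g(v)), g(f(g(v))) is a Nephew solution for (f, g). Put a := g(v) and b := g(f(g(v))). Then: (i) a ≠ b; (ii) f(a) ≠ f(b); and (iii) f(f(a)) = f(f(b)) = f(v). -/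
theorem not_nephewSol_iff {V : Type*} {f g : V → V} {v : V} :
    ¬ NephewSol f g v ↔ f (f (g v)) = f v ∧ f (g v) ≠ v := by
  rw [NephewSol, not_or, not_ne_iff]

theorem findChildren_properties_general {V : Type*} (f g : V → V) (v : V)
    (h0 : ¬ NephewSol f g v)
    (h2 : ¬ NephewSol f g (f (g v))) :
    g v ≠ g (f (g v)) ∧
    f (g v) ≠ f (g (f (g v))) ∧
    f (f (g v)) = f v ∧ f (f (g (f (g v)))) = f v := by
  obtain ⟨hv, -⟩ := not_nephewSol_iff.mp h0
  obtain ⟨hfgv, hne⟩ := not_nephewSol_iff.mp h2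
  have hfab : f (g v) ≠ f (g (f (g v))) := hne.symm
  exact ⟨fun hab => hfab (congrArg f hab), hfab, hv, hfgv.trans hv⟩

/-- Properties of the children `a = g v` and `b = g (f (g v))` produced by
`FindChildren`: if none of `v`, `g v`, `f (g v)`, `g (f (g v))` is a Nephew solution,
then (i) `a ≠ b`, (ii) `f a ≠ f b`, and (iii) `f (f a) = f (f b) = f v`. -/
theorem findChildren_properties {V : Type*} (f g : V → V) (v : V)
    (h0 : ¬ NephewSol f g v)
    (h1 : ¬ NephewSol f g (g v))
    (h2 : ¬ NephewSol f g (f (g v)))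
    (h3 : ¬ NephewSol f g (g (f (g v)))) :
    g v ≠ g (f (g v)) ∧
    f (g v) ≠ f (g (f (g v))) ∧
    f (f (g v)) = f v ∧ f (f (g (f (g v)))) = f v :=
  findChildren_properties_general f g v h0 h2
end

section
/- Let V be a finite set and f, g : V → V. Suppose v ∈ V is such that none of v, g(v), f(g(v)), g(f(g(v))) is a Nephew solution for (f, g), and suppose ℓ_f(v) ≥ 2. Put a := g(v) and b := g(f(g(v))). Then ℓ_f(a) = ℓ_f(b) = ℓ_f(v) + 1. -/
/-- `w` is a periodic point of `f`: some positive iterate of `f` fixes `w`. -/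
def NephewPeriodic {V : Type*} (f : V → V) (w : V) : Prop :=
  ∃ k : ℕ, 1 ≤ k ∧ f^[k] w = w

/-- The *level* of `v`: the least `k ≥ 0` such that `f^[k] v` is a periodic point. -/
noncomputable def level {V : Type*} (f : V → V) (v : V) : ℕ :=
  sInf {k : ℕ | NephewPeriodic f (f^[k] v)}

/-!
Failing to be a Nephew solution at `v` and at `f (g v)` gives `f (f a) = f v` and
`f (f b) = f (f a) = f v`, so both children reach `f v` after two steps. Since iterates of
periodic points are periodic, a point whose `m`-th iterate is the `n`-th iterate of `v`, with
`n < ℓ_f(v)`, has level `ℓ_f(v) - n + m`; here `m = 2` and `n = 1`.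
-/

open Function

section Level

variable {V : Type*} {f : V → V}

theorem NephewPeriodic.iterate {w : V} (h : NephewPeriodic f w) (m : ℕ) :
    NephewPeriodic f (f^[m] w) :=
  let ⟨k, hk, hw⟩ := h
  ⟨k, hk, IsPeriodicPt.apply_iterate hw m⟩

theorem nephewPeriodic_iterate_level {v : V} (h : 0 < level f v) :
    NephewPeriodic f (f^[level f v] v) :=
  Nat.sInf_mem (Nat.nonempty_of_pos_sInf h)

theorem not_nephewPeriodic_iterate_of_lt_level {v : V} {k : ℕ} (hk : k < level f v) :
    ¬ NephewPeriodic f (f^[k] v) :=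
  Nat.notMem_of_lt_sInf hk

theorem level_eq_of_nephewPeriodic_of_forall_lt {a : V} {n : ℕ}
    (hn : NephewPeriodic f (f^[n] a)) (hlt : ∀ k < n, ¬ NephewPeriodic f (f^[k] a)) :
    level f a = n :=
  le_antisymm (Nat.sInf_le hn) <| not_lt.1 fun h =>
    hlt _ h (Nat.sInf_mem ⟨n, hn⟩ : level f a ∈ {k | NephewPeriodic f (f^[k] a)})

theorem level_add_eq_of_iterate_eq {a v : V} {m n : ℕ} (h : f^[m] a = f^[n] v)
    (hn : n < level f v) : level f a + n = level f v + m := by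
  set L := level f v
  have hshift : ∀ k, m ≤ k → f^[k] a = f^[k - m + n] v := fun k hk => by
    rw [show k = k - m + m by omega, iterate_add_apply, h, ← iterate_add_apply]
    congr 1
    omega
  suffices level f a = L - n + m by omega
  refine level_eq_of_nephewPeriodic_of_forall_lt ?_ fun k hk hper => ?_
  · rw [hshift _ (by omega), show L - n + m - m + n = L by omega]
    exact nephewPeriodic_iterate_level (by omega)
  · rcases lt_or_ge k m with hkm | hkm
    · have hm := hper.iterate (m - k)
      rw [← iterate_add_apply, show m - k + k = m by omega, h] at hm
      exact not_nephewPeriodic_iterate_of_lt_level hn hm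
    · rw [hshift k hkm] at hper
      exact not_nephewPeriodic_iterate_of_lt_level (by omega) hper

end Level

theorem findChildren_levels_general {V : Type*} (f g : V → V) (v : V)
    (h0 : ¬ NephewSol f g v)
    (h2 : ¬ NephewSol f g (f (g v)))
    (hv : 2 ≤ level f v) :
    level f (g v) = level f v + 1 ∧ level f (g (f (g v))) = level f v + 1 := by
  simp only [NephewSol, not_or, not_not] at h0 h2
  have ha : f^[2] (g v) = f^[1] v := h0.1
  have hb : f^[2] (g (f (g v))) = f^[1] v := h2.1.trans h0.1
  have hla := level_add_eq_of_iterate_eq ha (by omega)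
  have hlb := level_add_eq_of_iterate_eq hb (by omega)
  omega

/-- If none of `v`, `g v`, `f (g v)`, `g (f (g v))` is a Nephew solution and
`ℓ_f(v) ≥ 2`, then the two children `a = g v` and `b = g (f (g v))` satisfy
`ℓ_f(a) = ℓ_f(b) = ℓ_f(v) + 1`. -/
theorem findChildren_levels {V : Type*} [Finite V] (f g : V → V) (v : V)
    (h0 : ¬ NephewSol f g v)
    (h1 : ¬ NephewSol f g (g v))
    (h2 : ¬ NephewSol f g (f (g v)))
    (h3 : ¬ NephewSol f g (g (f (g v))))
    (hv : 2 ≤ level f v) :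
    level f (g v) = level f v + 1 ∧ level f (g (f (g v))) = level f v + 1 :=
  findChildren_levels_general f g v h0 h2 hv
end

section
/- Let V be a finite set, f, g : V → V, and u ∈ V. Set v := g(u) and v′ := g(f(u)). Then at least one of u, f(u), v, v′ is a Nephew solution for (f, g), or ℓ_f(v) ≥ 2, or ℓ_f(v′) ≥ 2. -/
/-!
If `u` and `f u` are not Nephew solutions and `g u`, `g (f u)` have level at most `1`, then
`f (g u)` and `f (g (f u))` are periodic, hence so is `f u = f (f (g u))`. Since `f` is injective
on its periodic points, `f (f (g (f u))) = f (f u)` forces `f (g (f u)) = f u`, so `f u` is a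
Nephew solution after all.
-/

open Function

theorem Function.exists_iterate_mem_periodicPts {α : Type*} [Finite α] (f : α → α) (x : α) :
    ∃ n, f^[n] x ∈ periodicPts f := by
  obtain ⟨m, n, hne, heq⟩ := Finite.exists_ne_map_eq_of_infinite (fun n : ℕ => f^[n] x)
  wlog hlt : m < n generalizing m n
  · exact this n m hne.symm heq.symm (hne.lt_or_gt.resolve_left hlt)
  refine ⟨m, n - m, Nat.sub_pos_of_lt hlt, ?_⟩
  change f^[n - m] (f^[m] x) = f^[m] x
  rw [← iterate_add_apply, Nat.sub_add_cancel hlt.le]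
  exact heq.symm

section Level

variable {V : Type*} [Finite V]

theorem iterate_level_mem_periodicPts (f : V → V) (v : V) :
    f^[level f v] v ∈ periodicPts f :=
  -- `NephewPeriodic f` is definitionally membership in `periodicPts f`.
  Nat.sInf_mem (exists_iterate_mem_periodicPts f v)

theorem apply_mem_periodicPts_of_level_le_one {f : V → V} {v : V} (h : level f v ≤ 1) :
    f v ∈ periodicPts f := by
  have hv := iterate_level_mem_periodicPts f v
  interval_cases hl : level f v
  · exact (bijOn_periodicPts f).mapsTo hv
  · exact hv

end Level

/-- **Pair of vertices lemma.** Starting from any `u`, with `v = g u` and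
`v' = g (f u)`: either one of `u`, `f u`, `v`, `v'` is a Nephew solution, or one of
`v`, `v'` has level at least `2`. -/
theorem pair_of_vertices {V : Type*} [Finite V] (f g : V → V) (u : V) :
    NephewSol f g u ∨ NephewSol f g (f u) ∨
    NephewSol f g (g u) ∨ NephewSol f g (g (f u)) ∨
    2 ≤ level f (g u) ∨ 2 ≤ level f (g (f u)) := by
  by_contra! h
  obtain ⟨hu, hfu, -, -, hv, hv'⟩ := h
  simp only [NephewSol, not_or, not_not] at hu hfu
  have hfv := apply_mem_periodicPts_of_level_le_one (Nat.le_of_lt_succ hv)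
  have hfv' := apply_mem_periodicPts_of_level_le_one (Nat.le_of_lt_succ hv')
  have hfu_per : f u ∈ periodicPts f := hu.1 ▸ (bijOn_periodicPts f).mapsTo hfv
  exact hfu.2 ((bijOn_periodicPts f).injOn hfv' hfu_per hfu.1)
end

section
/- Let V be a set, f, g : V → V, and finv : V → Option V. Suppose v ∈ V satisfies finv(v) = some v′, and suppose none of v, v′, f(g(v′)) is a Nephew-with-Inverse solution for (f, finv, g). Put a := f(g(v′)) and b := f(g(a)). Then a ≠ b and f(a) = f(b) = v. -/
/-- An element `u` is a *Nephew-with-Inverse solution* for `(f, finv, g)` if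
`f (f (g u)) ≠ f u`, or `f (g u) = u`, or `finv u = some w` with `f w ≠ u`, or
`finv u = none` and `f (f u) ≠ f u`. -/
def NephewInvSol {V : Type*} (f : V → V) (finv : V → Option V) (g : V → V)
    (u : V) : Prop :=
  f (f (g u)) ≠ f u ∨ f (g u) = u ∨
  (∃ w : V, finv u = some w ∧ f w ≠ u) ∨
  (finv u = none ∧ f (f u) ≠ f u)

namespace NephewInvSol

variable {V : Type*} {f g : V → V} {finv : V → Option V} {u : V}

theorem map_map_comp_eq_of_not (h : ¬ NephewInvSol f finv g u) : f (f (g u)) = f u :=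
  not_not.mp fun hne => h (.inl hne)

theorem map_comp_ne_of_not (h : ¬ NephewInvSol f finv g u) : f (g u) ≠ u :=
  fun heq => h (.inr (.inl heq))

theorem map_eq_of_not_of_finv_eq_some (h : ¬ NephewInvSol f finv g u) {w : V}
    (hw : finv u = some w) : f w = u :=
  not_not.mp fun hne => h (.inr (.inr (.inl ⟨w, hw, hne⟩)))

end NephewInvSol

/-- Properties of the children produced by `FindChildrenAndParent`: if
`finv v = some v'` and none of `v`, `v'`, `f (g v')` is a Nephew-with-Inverse
solution, then with `a := f (g v')` and `b := f (g a)` we have `a ≠ b` and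
`f a = f b = v`. -/
theorem findChildrenAndParent_properties {V : Type*}
    (f g : V → V) (finv : V → Option V) (v v' : V)
    (hinv : finv v = some v')
    (h0 : ¬ NephewInvSol f finv g v)
    (h1 : ¬ NephewInvSol f finv g v')
    (h2 : ¬ NephewInvSol f finv g (f (g v'))) :
    f (g v') ≠ f (g (f (g v'))) ∧
    f (f (g v')) = v ∧ f (f (g (f (g v')))) = v := by
  have hfv' : f v' = v := NephewInvSol.map_eq_of_not_of_finv_eq_some h0 hinv
  have hfa : f (f (g v')) = v := (NephewInvSol.map_map_comp_eq_of_not h1).trans hfv'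
  exact ⟨(NephewInvSol.map_comp_ne_of_not h2).symm, hfa,
    (NephewInvSol.map_map_comp_eq_of_not h2).trans hfa⟩
end

section
/- Let V be a set with a distinguished element 1 and let F, L, R : V → V. Say ECsol(u) holds if F(L(u)) ≠ u, or F(R(u)) ≠ u, or (L(u) = R(u) and L(u) ≠ u); say WrongRoot holds if L(1) = 1 or R(1) = 1 or F(1) ≠ 1. Define f, g : V × {0,1} → V × {0,1} by: if ECsol(v) holds, then f(v,i) = g(v,i) = (v,i); else if v = 1 and WrongRoot holds, then f(1,i) = g(1,i) = (1,i); else if F(v) = L(v) = R(v) = v, then f(v,i) = (1,0) and g(v,i) = (v, 1−i); else set f(v,i) := (1,0) if v = 1, f(v,i) := (F(v), 1) if v ≠ 1 and v = R(F(v)), and f(v,i) := (F(v), 0) otherwise, and set g(1,0) := (L(L(1)), 0), g(1,1) := (1,1), g(v,0) := (R(v), 0) for v ≠ 1, and g(v,1) := (L(v), 0) for v ≠ 1. Then for every (v,i) ∈ V × {0,1}: if f(f(g(v,i))) ≠ f(v,i) or f(g(v,i)) = (v,i), then WrongRoot holds or at least one of v, L(v), R(v), L(L(1)) satisfies ECsol.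 (Correctness of the reduction from Empty-Child to Nephew.) -/
/-!
Suppose the root is right and none of `v`, `L v`, `R v`, `L (L 1)` is an Empty-Child
solution. In every case `f (g (v, i))` is then a point `p ≠ (v, i)` with `f p = f (v, i)`.
For an internal vertex `v ≠ 1`, `g` steps down to a child `c`, and `f` steps back up from `c`
to `(v, b)`, where the bit `b` records whether `c` is the right child; since `L v ≠ R v`, this
bit is the opposite of `i`, while `f (v, ·)` ignores the bit. At the root, `f` sends every
`(1, b)` to `(1, 0)`, and the detour through `L (L 1)` and `L 1` lands there as well. A leaf
is sent by `f` to `(1, 0)`, and `g` only flips its bit.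
-/

/-- `u` is an Empty-Child solution: `F (L u) ≠ u`, or `F (R u) ≠ u`, or
`L u = R u` with `L u ≠ u`. -/
def ECsol {V : Type*} (F L R : V → V) (u : V) : Prop :=
  F (L u) ≠ u ∨ F (R u) ≠ u ∨ (L u = R u ∧ L u ≠ u)

/-- The root `one` is wrong: `L one = one`, or `R one = one`, or `F one ≠ one`. -/
def WrongRoot {V : Type*} (one : V) (F L R : V → V) : Prop :=
  L one = one ∨ R one = one ∨ F one ≠ one

open Classical in
/-- The function `f` of the Nephew instance produced by `EmptyChildReduction`
(`false` plays the role of `0` and `true` of `1`). -/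
noncomputable def nephF {V : Type*} (one : V) (F L R : V → V) :
    V × Bool → V × Bool := fun p =>
  if ECsol F L R p.1 then p
  else if p.1 = one ∧ WrongRoot one F L R then p
  else if F p.1 = p.1 ∧ L p.1 = p.1 ∧ R p.1 = p.1 then (one, false)
  else if p.1 = one then (one, false)
  else if p.1 = R (F p.1) then (F p.1, true)
  else (F p.1, false)

open Classical in
/-- The function `g` of the Nephew instance produced by `EmptyChildReduction`. -/
noncomputable def nephG {V : Type*} (one : V) (F L R : V → V) :
    V × Bool → V × Bool := fun p =>
  if ECsol F L R p.1 then p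
  else if p.1 = one ∧ WrongRoot one F L R then p
  else if F p.1 = p.1 ∧ L p.1 = p.1 ∧ R p.1 = p.1 then (p.1, !p.2)
  else if p.1 = one ∧ p.2 = false then (L (L one), false)
  else if p.1 = one then (one, true)
  else if p.2 = false then (R p.1, false)
  else (L p.1, false)

def IsNephewSolution {α : Type*} (f g : α → α) (w : α) : Prop :=
  f (f (g w)) ≠ f w ∨ f (g w) = w

theorem not_isNephewSolution_of_eq {α : Type*} {f g : α → α} {w : α} (p : α)
    (hp : f (g w) = p) (hne : p ≠ w) (hfix : f p = f w) : ¬IsNephewSolution f g w := by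
  rintro (h | h)
  · exact h (hp ▸ hfix)
  · exact hne (hp ▸ h)

section Reduction

open Classical

variable {V : Type*} {one : V} {F L R : V → V}

def IsLeaf (F L R : V → V) (u : V) : Prop :=
  F u = u ∧ L u = u ∧ R u = u

theorem IsLeaf.of_apply_eq {c u : V} (hc : IsLeaf F L R c) (h : F c = u) : IsLeaf F L R u := by
  obtain rfl : c = u := hc.1.symm.trans h
  exact hc

theorem apply_L_of_not_ECsol {u : V} (hu : ¬ECsol F L R u) : F (L u) = u := by
  unfold ECsol at hu; tauto

theorem apply_R_of_not_ECsol {u : V} (hu : ¬ECsol F L R u) : F (R u) = u := by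
  unfold ECsol at hu; tauto

theorem L_ne_R_of_not_ECsol {u : V} (hu : ¬ECsol F L R u) (hleaf : ¬IsLeaf F L R u) :
    L u ≠ R u := by
  intro hLR
  have hL : L u = u := by unfold ECsol at hu; tauto
  exact hleaf ⟨by simpa [hL] using apply_L_of_not_ECsol hu, hL, hLR.symm.trans hL⟩

theorem apply_one_of_not_wrongRoot (hW : ¬WrongRoot one F L R) : F one = one := by
  unfold WrongRoot at hW; tauto

theorem L_one_ne_of_not_wrongRoot (hW : ¬WrongRoot one F L R) : L one ≠ one := by
  unfold WrongRoot at hW; tauto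

theorem not_isLeaf_one (hW : ¬WrongRoot one F L R) : ¬IsLeaf F L R one :=
  fun h => L_one_ne_of_not_wrongRoot hW h.2.1

theorem ne_one_of_apply_eq (hW : ¬WrongRoot one F L R) {c u : V} (h : F c = u) (hu : u ≠ one) :
    c ≠ one := by
  rintro rfl
  exact hu (h ▸ apply_one_of_not_wrongRoot hW)

theorem nephF_of_isLeaf (hW : ¬WrongRoot one F L R) {u : V} (hu : ¬ECsol F L R u)
    (hleaf : IsLeaf F L R u) (b : Bool) : nephF one F L R (u, b) = (one, false) := by
  simp [nephF, hu, hW, show F u = u ∧ L u = u ∧ R u = u from hleaf]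

theorem nephF_one (hW : ¬WrongRoot one F L R) (hone : ¬ECsol F L R one) (b : Bool) :
    nephF one F L R (one, b) = (one, false) := by
  simp [nephF, hone, hW, L_one_ne_of_not_wrongRoot hW]

theorem nephF_one_false (hW : ¬WrongRoot one F L R) :
    nephF one F L R (one, false) = (one, false) := by
  by_cases hone : ECsol F L R one
  · simp [nephF, hone]
  · exact nephF_one hW hone false

theorem nephF_of_ne_one (hW : ¬WrongRoot one F L R) {u : V} (hu : ¬ECsol F L R u)
    (hleaf : ¬IsLeaf F L R u) (hne : u ≠ one) (b : Bool) :
    nephF one F L R (u, b) = (F u, decide (u = R (F u))) := by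
  simp only [IsLeaf] at hleaf
  simp only [nephF, hu, hW, hleaf, hne, and_false, if_false]
  by_cases hR : u = R (F u)
  · rw [if_pos hR, decide_eq_true hR]
  · rw [if_neg hR, decide_eq_false hR]

theorem nephF_congr_snd (hW : ¬WrongRoot one F L R) {u : V} (hu : ¬ECsol F L R u)
    (b b' : Bool) : nephF one F L R (u, b) = nephF one F L R (u, b') := by
  simp [nephF, hu, hW]

theorem nephG_of_isLeaf (hW : ¬WrongRoot one F L R) {u : V} (hu : ¬ECsol F L R u)
    (hleaf : IsLeaf F L R u) (b : Bool) : nephG one F L R (u, b) = (u, !b) := by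
  simp [nephG, hu, hW, show F u = u ∧ L u = u ∧ R u = u from hleaf]

theorem nephG_one_false (hW : ¬WrongRoot one F L R) (hone : ¬ECsol F L R one) :
    nephG one F L R (one, false) = (L (L one), false) := by
  simp [nephG, hone, hW, L_one_ne_of_not_wrongRoot hW]

theorem nephG_one_true (hW : ¬WrongRoot one F L R) (hone : ¬ECsol F L R one) :
    nephG one F L R (one, true) = (one, true) := by
  simp [nephG, hone, hW, L_one_ne_of_not_wrongRoot hW]

theorem nephG_false_of_ne_one (hW : ¬WrongRoot one F L R) {u : V} (hu : ¬ECsol F L R u)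
    (hleaf : ¬IsLeaf F L R u) (hne : u ≠ one) :
    nephG one F L R (u, false) = (R u, false) := by
  simp only [IsLeaf] at hleaf
  simp [nephG, hu, hW, hleaf, hne]

theorem nephG_true_of_ne_one (hW : ¬WrongRoot one F L R) {u : V} (hu : ¬ECsol F L R u)
    (hleaf : ¬IsLeaf F L R u) (hne : u ≠ one) :
    nephG one F L R (u, true) = (L u, false) := by
  simp only [IsLeaf] at hleaf
  simp [nephG, hu, hW, hleaf, hne]

theorem not_isNephewSolution_one_true (hW : ¬WrongRoot one F L R) (hone : ¬ECsol F L R one) :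
    ¬IsNephewSolution (nephF one F L R) (nephG one F L R) (one, true) :=
  not_isNephewSolution_of_eq (one, false)
    (by rw [nephG_one_true hW hone, nephF_one hW hone]) (by simp)
    (by rw [nephF_one hW hone, nephF_one hW hone])

theorem not_isNephewSolution_one_false (hW : ¬WrongRoot one F L R) (hone : ¬ECsol F L R one)
    (hL : ¬ECsol F L R (L one)) (hLL : ¬ECsol F L R (L (L one))) :
    ¬IsNephewSolution (nephF one F L R) (nephG one F L R) (one, false) := by
  have hFL : F (L one) = one := apply_L_of_not_ECsol hone
  have hFLL : F (L (L one)) = L one := apply_L_of_not_ECsol hL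
  have hL_ne : L one ≠ one := L_one_ne_of_not_wrongRoot hW
  have hL_leaf : ¬IsLeaf F L R (L one) := fun h => not_isLeaf_one hW (h.of_apply_eq hFL)
  have hLL_ne : L (L one) ≠ one := ne_one_of_apply_eq hW hFLL hL_ne
  have hLL_leaf : ¬IsLeaf F L R (L (L one)) := fun h => hL_leaf (h.of_apply_eq hFLL)
  refine not_isNephewSolution_of_eq (L one, decide (L (L one) = R (L one))) ?_ ?_ ?_
  · rw [nephG_one_false hW hone, nephF_of_ne_one hW hLL hLL_leaf hLL_ne, hFLL]
  · simp [hL_ne]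
  · rw [nephF_of_ne_one hW hL hL_leaf hL_ne, hFL, nephF_one hW hone,
      decide_eq_false (L_ne_R_of_not_ECsol hone (not_isLeaf_one hW))]

theorem not_isNephewSolution_of_isLeaf (hW : ¬WrongRoot one F L R) {v : V}
    (hv : ¬ECsol F L R v) (hleaf : IsLeaf F L R v) (hne : v ≠ one) (i : Bool) :
    ¬IsNephewSolution (nephF one F L R) (nephG one F L R) (v, i) :=
  not_isNephewSolution_of_eq (one, false)
    (by rw [nephG_of_isLeaf hW hv hleaf, nephF_of_isLeaf hW hv hleaf])
    (fun h => hne (congrArg Prod.fst h).symm)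
    (by rw [nephF_one_false hW, nephF_of_isLeaf hW hv hleaf])

theorem not_isNephewSolution_of_ne_one (hW : ¬WrongRoot one F L R) {v : V}
    (hv : ¬ECsol F L R v) (hL : ¬ECsol F L R (L v)) (hR : ¬ECsol F L R (R v))
    (hleaf : ¬IsLeaf F L R v) (hne : v ≠ one) (i : Bool) :
    ¬IsNephewSolution (nephF one F L R) (nephG one F L R) (v, i) := by
  cases i with
  | false =>
    have hFR : F (R v) = v := apply_R_of_not_ECsol hv
    refine not_isNephewSolution_of_eq (v, true) ?_ (by simp) (nephF_congr_snd hW hv true false)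
    rw [nephG_false_of_ne_one hW hv hleaf hne,
      nephF_of_ne_one hW hR (fun h => hleaf (h.of_apply_eq hFR)) (ne_one_of_apply_eq hW hFR hne),
      hFR, decide_eq_true rfl]
  | true =>
    have hFL : F (L v) = v := apply_L_of_not_ECsol hv
    refine not_isNephewSolution_of_eq (v, false) ?_ (by simp) (nephF_congr_snd hW hv false true)
    rw [nephG_true_of_ne_one hW hv hleaf hne,
      nephF_of_ne_one hW hL (fun h => hleaf (h.of_apply_eq hFL)) (ne_one_of_apply_eq hW hFL hne),
      hFL, decide_eq_false (L_ne_R_of_not_ECsol hv hleaf)]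

theorem not_isNephewSolution (hW : ¬WrongRoot one F L R) {v : V} (hv : ¬ECsol F L R v)
    (hL : ¬ECsol F L R (L v)) (hR : ¬ECsol F L R (R v)) (hLL : ¬ECsol F L R (L (L one)))
    (i : Bool) : ¬IsNephewSolution (nephF one F L R) (nephG one F L R) (v, i) := by
  by_cases hne : v = one
  · subst hne
    cases i
    · exact not_isNephewSolution_one_false hW hv hL hLL
    · exact not_isNephewSolution_one_true hW hv
  by_cases hleaf : IsLeaf F L R v
  · exact not_isNephewSolution_of_isLeaf hW hv hleaf hne i
  · exact not_isNephewSolution_of_ne_one hW hv hL hR hleaf hne i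

end Reduction

/-- **Correctness of the reduction from Empty-Child to Nephew.** If `(v, i)` is a
Nephew solution of the instance `(nephF, nephG)`, then the root is wrong or one of
`v`, `L v`, `R v`, `L (L one)` is an Empty-Child solution. -/
theorem emptyChild_to_nephew {V : Type*} (one : V) (F L R : V → V)
    (v : V) (i : Bool)
    (h : nephF one F L R (nephF one F L R (nephG one F L R (v, i)))
           ≠ nephF one F L R (v, i)
         ∨ nephF one F L R (nephG one F L R (v, i)) = (v, i)) :
    WrongRoot one F L R ∨ ECsol F L R v ∨ ECsol F L R (L v) ∨
    ECsol F L R (R v) ∨ ECsol F L R (L (L one)) := by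
  by_contra hc
  simp only [not_or] at hc
  obtain ⟨hW, hv, hL, hR, hLL⟩ := hc
  exact not_isNephewSolution hW hv hL hR hLL i h
end

section
/- Let n ≥ 1, N := 2^n, and let f : [N] → [2N] and g : [2N] → [N] be functions (where [k] = {1, …, k}). Let W := {(i,j) : 1 ≤ i ≤ 2n, 1 ≤ j ≤ 2^{i−1}} ∪ {(i,j) : 2n < i ≤ 2n + 2N, 1 ≤ j ≤ N}, and define F, L, R : W → W by: F(1,1) := (1,1); F(i,j) := (i−1, ⌈j/2⌉) for 2 ≤ i ≤ 2n; F(i+2n, j) := (f(i)+2n, ⌈f(j)/2⌉) for 1 ≤ i ≤ N and j ∈ [N]; F(i+2n+N, j) := (2n, ⌈((i−1)·N + j)/2⌉) for 1 ≤ i ≤ N and j ∈ [N]; L(i,j) := (i+1, 2j−1) and R(i,j) := (i+1, 2j) for 1 ≤ i ≤ 2n−1 and j ∈ [2^{i−1}]; L(2n, (i−1)·N/2 + j) := (i+2n+N, 2j−1) and R(2n, (i−1)·N/2 + j) := (i+2n+N, 2j) for i ∈ [N] and j ∈ [N/2]; and L(i+2n, j) := (g(i)+2n, g(2j−1)) and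 R(i+2n, j) := (g(i)+2n, g(2j)) for i ∈ [2N] and j ∈ [N]. Then for every (i′, j) ∈ W: if F(L(i′,j)) ≠ (i′,j), or F(R(i′,j)) ≠ (i′,j), or (L(i′,j) = R(i′,j) and L(i′,j) ≠ (i′,j)), then i′ > 2n and, writing i := i′ − 2n, at least one of f(g(i)) ≠ i, f(g(2j−1)) ≠ 2j−1, f(g(2j)) ≠ 2j holds. (Correctness of the reduction from Lossy-Code to Empty-Child.) -/
/-!
Above the bottom `2N` levels, `L` and `R` give two distinct children that `F` maps back, by
construction (on level `2n` this needs `N` even). A bottom vertex `(i + 2n, j)` has children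
`(g i + 2n, g (2j-1))` and `(g i + 2n, g (2j))`, whose father is computed through `f`: if `f ∘ g`
fixes `i`, `2j-1` and `2j`, this father is `(i + 2n, j)` again, and the two children differ
because their second coordinates have different images under `f`.
-/

/-- The vertex set `W` of the tree built from a Lossy-Code instance: the first `2n`
levels form a complete binary tree (level `i` has `2^(i-1)` vertices) and the
remaining `2N` levels each contain `N` vertices. -/
def memW (n N : ℕ) (p : ℕ × ℕ) : Prop :=
  (1 ≤ p.1 ∧ p.1 ≤ 2 * n ∧ 1 ≤ p.2 ∧ p.2 ≤ 2 ^ (p.1 - 1)) ∨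
  (2 * n < p.1 ∧ p.1 ≤ 2 * n + 2 * N ∧ 1 ≤ p.2 ∧ p.2 ≤ N)

/-- The father function of the tree: `F (1,1) = (1,1)`; `F (i,j) = (i-1, ⌈j/2⌉)` for
`2 ≤ i ≤ 2n`; `F (i+2n, j) = (f i + 2n, ⌈f j / 2⌉)` for `1 ≤ i ≤ N`; and
`F (i+2n+N, j) = (2n, ⌈((i-1)·N + j)/2⌉)` for `1 ≤ i ≤ N`. -/
def lcF (n N : ℕ) (f : ℕ → ℕ) (p : ℕ × ℕ) : ℕ × ℕ :=
  if p.1 ≤ 1 then (1, 1)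
  else if p.1 ≤ 2 * n then (p.1 - 1, (p.2 + 1) / 2)
  else if p.1 ≤ 2 * n + N then (f (p.1 - 2 * n) + 2 * n, (f p.2 + 1) / 2)
  else (2 * n, ((p.1 - 2 * n - N - 1) * N + p.2 + 1) / 2)

/-- The left-child function: `L (i,j) = (i+1, 2j-1)` for `1 ≤ i ≤ 2n-1`;
`L (2n, (i-1)·N/2 + j) = (i+2n+N, 2j-1)` for `i ∈ [N]`, `j ∈ [N/2]`; and
`L (i+2n, j) = (g i + 2n, g (2j-1))` for `i ∈ [2N]`. -/
def lcL (n N : ℕ) (g : ℕ → ℕ) (p : ℕ × ℕ) : ℕ × ℕ :=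
  if p.1 < 2 * n then (p.1 + 1, 2 * p.2 - 1)
  else if p.1 = 2 * n then
    ((p.2 - 1) / (N / 2) + 1 + 2 * n + N, 2 * ((p.2 - 1) % (N / 2) + 1) - 1)
  else (g (p.1 - 2 * n) + 2 * n, g (2 * p.2 - 1))

/-- The right-child function: `R (i,j) = (i+1, 2j)` for `1 ≤ i ≤ 2n-1`;
`R (2n, (i-1)·N/2 + j) = (i+2n+N, 2j)` for `i ∈ [N]`, `j ∈ [N/2]`; and
`R (i+2n, j) = (g i + 2n, g (2j))` for `i ∈ [2N]`. -/
def lcR (n N : ℕ) (g : ℕ → ℕ) (p : ℕ × ℕ) : ℕ × ℕ :=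
  if p.1 < 2 * n then (p.1 + 1, 2 * p.2)
  else if p.1 = 2 * n then
    ((p.2 - 1) / (N / 2) + 1 + 2 * n + N, 2 * ((p.2 - 1) % (N / 2) + 1))
  else (g (p.1 - 2 * n) + 2 * n, g (2 * p.2))

def HasEmptyChild {α : Type*} (F L R : α → α) (u : α) : Prop :=
  F (L u) ≠ u ∨ F (R u) ≠ u ∨ (L u = R u ∧ L u ≠ u)

theorem not_hasEmptyChild {α : Type*} {F L R : α → α} {u : α}
    (hL : F (L u) = u) (hR : F (R u) = u) (hLR : L u ≠ R u) : ¬ HasEmptyChild F L R u := by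
  rintro (h | h | ⟨h, -⟩) <;> contradiction

section EmptyChild

variable {n N : ℕ} {f g : ℕ → ℕ} {i j : ℕ}

theorem lcF_of_le_two_mul (hi : 1 < i) (hin : i ≤ 2 * n) (k : ℕ) :
    lcF n N f (i, k) = (i - 1, (k + 1) / 2) := by
  simp only [lcF]
  rw [if_neg (by omega), if_pos hin]

theorem lcF_of_le_two_mul_add (hn : 1 ≤ n) (hi : 2 * n < i) (hiN : i ≤ 2 * n + N) (k : ℕ) :
    lcF n N f (i, k) = (f (i - 2 * n) + 2 * n, (f k + 1) / 2) := by
  simp only [lcF]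
  rw [if_neg (by omega), if_neg (by omega), if_pos hiN]

theorem lcF_of_two_mul_add_lt (hn : 1 ≤ n) (q k : ℕ) :
    lcF n N f (q + 1 + 2 * n + N, k) = (2 * n, (q * N + k + 1) / 2) := by
  simp only [lcF]
  rw [if_neg (by omega), if_neg (by omega), if_neg (by omega),
    show q + 1 + 2 * n + N - 2 * n - N - 1 = q by omega]

theorem not_hasEmptyChild_of_lt_two_mul (hi : 1 ≤ i) (hin : i < 2 * n) (hj : 1 ≤ j) :
    ¬ HasEmptyChild (lcF n N f) (lcL n N g) (lcR n N g) (i, j) := by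
  have hL : lcL n N g (i, j) = (i + 1, 2 * j - 1) := if_pos hin
  have hR : lcR n N g (i, j) = (i + 1, 2 * j) := if_pos hin
  apply not_hasEmptyChild <;>
    simp only [hL, hR, lcF_of_le_two_mul (by omega : 1 < i + 1) hin, ne_eq, Prod.mk.injEq] <;>
    omega

theorem not_hasEmptyChild_two_mul (hn : 1 ≤ n) (hN : Even N) (hj : 1 ≤ j) :
    ¬ HasEmptyChild (lcF n N f) (lcL n N g) (lcR n N g) (2 * n, j) := by
  obtain ⟨d, rfl⟩ := hN.two_dvd
  have hL : lcL n (2 * d) g (2 * n, j)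
      = ((j - 1) / d + 1 + 2 * n + 2 * d, 2 * ((j - 1) % d + 1) - 1) := by
    simp [lcL]
  have hR : lcR n (2 * d) g (2 * n, j)
      = ((j - 1) / d + 1 + 2 * n + 2 * d, 2 * ((j - 1) % d + 1)) := by
    simp [lcR]
  have hqr := Nat.div_add_mod (j - 1) d
  generalize (j - 1) / d = q, (j - 1) % d = r at hL hR hqr
  have hqN : q * (2 * d) = 2 * (d * q) := by ring
  apply not_hasEmptyChild <;>
    simp only [hL, hR, lcF_of_two_mul_add_lt hn, hqN, Prod.mk.injEq, ne_eq, true_and] <;> omega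

theorem not_hasEmptyChild_of_two_mul_lt (hn : 1 ≤ n) (hi : 2 * n < i)
    (hgi : 1 ≤ g (i - 2 * n) ∧ g (i - 2 * n) ≤ N) (hj : 1 ≤ j)
    (hfg : f (g (i - 2 * n)) = i - 2 * n) (hfg₁ : f (g (2 * j - 1)) = 2 * j - 1)
    (hfg₂ : f (g (2 * j)) = 2 * j) :
    ¬ HasEmptyChild (lcF n N f) (lcL n N g) (lcR n N g) (i, j) := by
  have hL : lcL n N g (i, j) = (g (i - 2 * n) + 2 * n, g (2 * j - 1)) := by
    simp only [lcL]; rw [if_neg (by omega), if_neg (by omega)]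
  have hR : lcR n N g (i, j) = (g (i - 2 * n) + 2 * n, g (2 * j)) := by
    simp only [lcR]; rw [if_neg (by omega), if_neg (by omega)]
  have hF := @lcF_of_le_two_mul_add n N f (g (i - 2 * n) + 2 * n) hn (by omega) (by omega)
  apply not_hasEmptyChild <;>
    simp only [hL, hR, hF, Nat.add_sub_cancel, hfg, hfg₁, hfg₂, Prod.mk.injEq, ne_eq, true_and]
  · omega
  · omega
  · intro h
    have := congrArg f h
    omega

end EmptyChild

theorem lossyCode_to_emptyChild_general (n N : ℕ) (hn : 1 ≤ n) (hN : N = 2 ^ n)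
    (f g : ℕ → ℕ)
    (hg : ∀ i : ℕ, 1 ≤ i → i ≤ 2 * N → 1 ≤ g i ∧ g i ≤ N)
    (i' j : ℕ) (hW : memW n N (i', j))
    (hsol : lcF n N f (lcL n N g (i', j)) ≠ (i', j)
          ∨ lcF n N f (lcR n N g (i', j)) ≠ (i', j)
          ∨ (lcL n N g (i', j) = lcR n N g (i', j) ∧ lcL n N g (i', j) ≠ (i', j))) :
    2 * n < i' ∧
      (f (g (i' - 2 * n)) ≠ i' - 2 * n ∨
       f (g (2 * j - 1)) ≠ 2 * j - 1 ∨
       f (g (2 * j)) ≠ 2 * j) := by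
  rcases hW with ⟨hi, hin, hj, -⟩ | ⟨hi, hiN, hj, -⟩
  · exfalso
    rcases hin.lt_or_eq with hlt | rfl
    · exact not_hasEmptyChild_of_lt_two_mul hi hlt hj hsol
    · have hNeven : Even N := hN ▸ (Nat.even_pow' (by omega)).mpr even_two
      exact not_hasEmptyChild_two_mul hn hNeven hj hsol
  · refine ⟨hi, ?_⟩
    by_contra! hfg
    exact not_hasEmptyChild_of_two_mul_lt hn hi (hg _ (by omega) (by omega)) hj
      hfg.1 hfg.2.1 hfg.2.2 hsol

/-- **Correctness of the reduction from Lossy-Code to Empty-Child.** If a vertex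
`(i', j)` of `W` has an empty child, then `i' > 2n` and, with `i := i' - 2n`, one
of `f (g i) ≠ i`, `f (g (2j-1)) ≠ 2j-1`, `f (g (2j)) ≠ 2j` holds, i.e., we obtain
a Lossy-Code solution. -/
theorem lossyCode_to_emptyChild (n N : ℕ) (hn : 1 ≤ n) (hN : N = 2 ^ n)
    (f g : ℕ → ℕ)
    (hf : ∀ i : ℕ, 1 ≤ i → i ≤ N → 1 ≤ f i ∧ f i ≤ 2 * N)
    (hg : ∀ i : ℕ, 1 ≤ i → i ≤ 2 * N → 1 ≤ g i ∧ g i ≤ N)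
    (i' j : ℕ) (hW : memW n N (i', j))
    (hsol : lcF n N f (lcL n N g (i', j)) ≠ (i', j)
          ∨ lcF n N f (lcR n N g (i', j)) ≠ (i', j)
          ∨ (lcL n N g (i', j) = lcR n N g (i', j) ∧ lcL n N g (i', j) ≠ (i', j))) :
    2 * n < i' ∧
      (f (g (i' - 2 * n)) ≠ i' - 2 * n ∨
       f (g (2 * j - 1)) ≠ 2 * j - 1 ∨
       f (g (2 * j)) ≠ 2 * j) :=
  lossyCode_to_emptyChild_general n N hn hN f g hg i' j hW hsol
end

section
/- Let t be a binary tree (with constructors nil and node, each node having a left and a right subtree), and for a list p of booleans let sub(t, p) denote the subtree of t at position p, obtained by repeatedly descending into the left subtree on false and the right subtree on true (with sub(nil, p) = nil). Then for every n ∈ ℕ: 3 · |{p ∈ {false,true}^{n+1} : sub(t, p) is a node whose two immediate subtrees are both nodes}| ≤ numNodes(t), where numNodes(t) is the total number of node constructors in t. Consequently, if numNodes(t) ≤ 2^n, then at most a 1/6 fraction of the 2^{n+1} strings p ∈ {false,true}^{n+1} have the property that sub(t, p) is a node with both immediate subtrees nodes. -/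
/-- The subtree of `t` at position `p`: descend left on `false`, right on `true`. -/
def subAt {α : Type*} : BinaryTree α → List Bool → BinaryTree α
  | t, [] => t
  | BinaryTree.nil, _ :: _ => BinaryTree.nil
  | BinaryTree.node _ l r, b :: p => subAt (if b then r else l) p

/-- `t` is a node whose two immediate subtrees are both nodes. -/
def isBranchy {α : Type*} : BinaryTree α → Bool
  | BinaryTree.node _ (BinaryTree.node _ _ _) (BinaryTree.node _ _ _) => true
  | _ => false

/-! Splitting a direction string into its first letter and the rest shows that, at a node, the
number of strings of length `k + 1` reaching a branchy subtree is the sum of the corresponding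
numbers of length `k` for the two children, while `numNodes` is the sum plus one. A branchy tree
has at least three nodes, so induction on the length gives `3 * count ≤ numNodes`. -/

open Finset

theorem card_filter_ofFn_succ {β : Type*} [Fintype β] (Q : List β → Prop) [DecidablePred Q]
    (k : ℕ) :
    #{x : Fin (k + 1) → β | Q (List.ofFn x)} = ∑ b, #{x : Fin k → β | Q (b :: List.ofFn x)} := by
  simp only [card_filter]
  rw [← (Fin.consEquiv fun _ => β).sum_comp, Fintype.sum_prod_type]
  simp only [Fin.consEquiv, Equiv.coe_fn_mk, List.ofFn_cons]

section Descent

variable {α : Type*}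

theorem subAt_nil (p : List Bool) : subAt (BinaryTree.nil : BinaryTree α) p = .nil := by
  cases p <;> rfl

theorem three_le_numNodes_of_isBranchy {t : BinaryTree α} (h : isBranchy t = true) :
    3 ≤ t.numNodes := by
  match t, h with
  | .node _ (.node _ _ _) (.node _ _ _), _ => simp only [BinaryTree.numNodes]; omega

def branchyCount (t : BinaryTree α) (k : ℕ) : ℕ :=
  #{x : Fin k → Bool | isBranchy (subAt t (List.ofFn x)) = true}

theorem branchyCount_zero (t : BinaryTree α) :
    branchyCount t 0 = if isBranchy t = true then 1 else 0 := by
  simp only [branchyCount, subAt, List.ofFn_zero]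
  split_ifs <;> simp_all

theorem branchyCount_nil (k : ℕ) : branchyCount (.nil : BinaryTree α) k = 0 := by
  simp [branchyCount, subAt_nil, isBranchy]

theorem branchyCount_node_succ (a : α) (l r : BinaryTree α) (k : ℕ) :
    branchyCount (.node a l r) (k + 1) = branchyCount l k + branchyCount r k := by
  rw [branchyCount, card_filter_ofFn_succ (fun p => isBranchy (subAt (.node a l r) p) = true),
    Fintype.sum_bool, add_comm]
  rfl

theorem three_mul_branchyCount_le (k : ℕ) (t : BinaryTree α) :
    3 * branchyCount t k ≤ t.numNodes := by
  induction k generalizing t with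
  | zero =>
    rw [branchyCount_zero]
    split_ifs with h
    · exact three_le_numNodes_of_isBranchy h
    · omega
  | succ k ih =>
    cases t with
    | nil => simp [branchyCount_nil]
    | node a l r =>
      rw [branchyCount_node_succ, BinaryTree.numNodes]
      linarith [ih l, ih r]

end Descent

/-- **Counting fact for random descent in a binary tree.** For every binary tree `t`
and every `n`, three times the number of direction strings `p` of length `n + 1`
such that the subtree of `t` at `p` is a node with both immediate subtrees nodes is
at most the number of nodes of `t`; consequently, if `t` has at most `2 ^ n` nodes,
then at most a `1/6` fraction of the `2 ^ (n + 1)` strings have this property. -/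
theorem btree_leaf_counting {α : Type*} (t : BinaryTree α) (n : ℕ) :
    3 * ((Finset.univ : Finset (Fin (n + 1) → Bool)).filter
        (fun x => isBranchy (subAt t (List.ofFn x)) = true)).card ≤ t.numNodes ∧
    (t.numNodes ≤ 2 ^ n →
      6 * ((Finset.univ : Finset (Fin (n + 1) → Bool)).filter
        (fun x => isBranchy (subAt t (List.ofFn x)) = true)).card ≤ 2 ^ (n + 1)) := by
  have hcount : 3 * branchyCount t (n + 1) ≤ t.numNodes := three_mul_branchyCount_le (n + 1) t
  refine ⟨hcount, fun hsize => ?_⟩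
  change 6 * branchyCount t (n + 1) ≤ 2 ^ (n + 1)
  rw [pow_succ]
  omega
end

section
/- Let N ≥ 1, ℓ ≥ 1, and let S_1, …, S_ℓ ⊆ Fin N. Let a_1, …, a_ℓ and a_{i,j} (for 1 ≤ i < j ≤ ℓ) be natural numbers, let e ≥ 1 be a natural number, and assume Σ_{i=1}^ℓ a_i ≥ Σ_{1 ≤ i < j ≤ ℓ} a_{i,j} + e; set m := Σ_i a_i − Σ_{i<j} a_{i,j} − e. Suppose we are given functions f_i : Fin a_i → Fin N and g_i : Fin N → Fin a_i for each i, functions f_{i,j} : Fin a_{i,j} → Fin N and g_{i,j} : Fin N → Fin a_{i,j} for each i < j, and functions f̃ : Fin m → Fin N and g̃ : Fin N → Fin m. Then at least one of the following holds: (s1) there exist i and x ∈ Fin a_i with f_i(x) ∉ S_i or g_i(f_i(x)) ≠ x; (s2) there exist i < j and y ∈ S_i ∩ S_j with f_{i,j}(g_{i,j}(y)) ≠ y; (s3) there exists y ∈ S_1 ∪ ⋯ ∪ S_ℓ with f̃(g̃(y)) ≠ y. (Totality of the Inclusion-Exclusion search problem.) -/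
/-!
If every certificate were valid we would have `a i ≤ |S i|`, `|S i ∩ S j| ≤ a2 i j` and
`|⋃ S i| ≤ m`, hence `|⋃ S i| ≤ m < ∑ a i - ∑ a2 i j ≤ ∑ |S i| - ∑ |S i ∩ S j|`, contradicting
the Bonferroni inequality. That inequality is checked pointwise: a point lying in `k ≥ 1` of the
sets is counted `k` times on the left and `1 + k.choose 2 ≥ k` times on the right.
-/

namespace Finset

variable {ι β : Type*}

theorem sum_card_eq_sum_card_filter_mem [DecidableEq β] {s : Finset ι} {t : ι → Finset β}
    {u : Finset β} (h : ∀ i ∈ s, t i ⊆ u) :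
    ∑ i ∈ s, #(t i) = ∑ y ∈ u, #{i ∈ s | y ∈ t i} := by
  calc ∑ i ∈ s, #(t i) = ∑ i ∈ s, #{y ∈ u | y ∈ t i} := by
        refine sum_congr rfl fun i hi => ?_
        rw [filter_mem_eq_inter, inter_eq_right.2 (h i hi)]
    _ = ∑ y ∈ u, #{i ∈ s | y ∈ t i} := by
        simp only [card_filter]
        exact sum_comm

theorem card_le_one_add_card_filter_lt [LinearOrder ι] {s : Finset ι} (hs : s.Nonempty) :
    #s ≤ 1 + #{p ∈ s ×ˢ s | p.1 < p.2} := by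
  have hmin := s.min'_mem hs
  have herase : #(s.erase (s.min' hs)) ≤ #{p ∈ s ×ˢ s | p.1 < p.2} := by
    refine card_le_card_of_injOn (s.min' hs, ·) (fun j hj => ?_) fun _ _ _ _ h => congrArg Prod.snd h
    obtain ⟨hne, hj⟩ := mem_erase.1 hj
    simpa [hmin, hj] using (s.min'_le j hj).lt_of_ne' hne
  have hcard := card_erase_add_one hmin
  omega

theorem sum_card_le_card_biUnion_add_sum_card_inter [LinearOrder ι] [DecidableEq β]
    (s : Finset ι) (t : ι → Finset β) :
    ∑ i ∈ s, #(t i) ≤ #(s.biUnion t) + ∑ p ∈ s ×ˢ s with p.1 < p.2, #(t p.1 ∩ t p.2) := by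
  set u := s.biUnion t
  have hpairs : ∀ y, {p ∈ {p ∈ s ×ˢ s | p.1 < p.2} | y ∈ t p.1 ∩ t p.2}
      = {p ∈ {i ∈ s | y ∈ t i} ×ˢ {i ∈ s | y ∈ t i} | p.1 < p.2} := by
    intro y; ext p; simp only [mem_filter, mem_product, mem_inter]; tauto
  rw [sum_card_eq_sum_card_filter_mem (u := u) fun i hi => subset_biUnion_of_mem t hi,
    sum_card_eq_sum_card_filter_mem (u := u) fun p hp =>
      inter_subset_left.trans (subset_biUnion_of_mem t (mem_product.1 (mem_filter.1 hp).1).1),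
    card_eq_sum_ones, ← sum_add_distrib]
  refine sum_le_sum fun y hy => ?_
  rw [hpairs]
  obtain ⟨i, hi, hyi⟩ := mem_biUnion.1 hy
  exact card_le_one_add_card_filter_lt ⟨i, mem_filter.2 ⟨hi, hyi⟩⟩

theorem card_le_card_of_leftInverse [Fintype ι] {s : Finset β} {f : ι → β} {g : β → ι}
    (hf : ∀ x, f x ∈ s) (hgf : Function.LeftInverse g f) : Fintype.card ι ≤ #s :=
  card_le_card_of_injOn f (fun x _ => hf x) hgf.injective.injOn

theorem card_le_card_of_leftInvOn [Fintype ι] {s : Finset β} {f : ι → β} {g : β → ι}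
    (h : Set.LeftInvOn f g s) : #s ≤ Fintype.card ι :=
  card_le_card_of_injOn g (fun _ _ => mem_univ _) h.injOn

end Finset

open Finset in
theorem inclusion_exclusion_total_general (N ℓ : ℕ)
    (S : Fin ℓ → Set (Fin N))
    (a : Fin ℓ → ℕ) (a2 : Fin ℓ → Fin ℓ → ℕ) (e : ℕ) (he : 1 ≤ e)
    (hsum : (∑ p ∈ univ.filter (fun p : Fin ℓ × Fin ℓ => p.1 < p.2), a2 p.1 p.2) + e
              ≤ ∑ i : Fin ℓ, a i)
    (f1 : ∀ i : Fin ℓ, Fin (a i) → Fin N)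
    (g1 : ∀ i : Fin ℓ, Fin N → Fin (a i))
    (f2 : ∀ i j : Fin ℓ, i < j → Fin (a2 i j) → Fin N)
    (g2 : ∀ i j : Fin ℓ, i < j → Fin N → Fin (a2 i j))
    (ft : Fin ((∑ i : Fin ℓ, a i) -
            (∑ p ∈ univ.filter (fun p : Fin ℓ × Fin ℓ => p.1 < p.2), a2 p.1 p.2) - e)
          → Fin N)
    (gt : Fin N →
          Fin ((∑ i : Fin ℓ, a i) -
            (∑ p ∈ univ.filter (fun p : Fin ℓ × Fin ℓ => p.1 < p.2), a2 p.1 p.2) - e)) :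
    (∃ i : Fin ℓ, ∃ x : Fin (a i), f1 i x ∉ S i ∨ g1 i (f1 i x) ≠ x) ∨
    (∃ i j : Fin ℓ, ∃ hij : i < j, ∃ y : Fin N,
        y ∈ S i ∧ y ∈ S j ∧ f2 i j hij (g2 i j hij y) ≠ y) ∨
    (∃ y : Fin N, (∃ i : Fin ℓ, y ∈ S i) ∧ ft (gt y) ≠ y) := by
  classical
  by_contra! ⟨h1, h2, h3⟩
  let T (i : Fin ℓ) : Finset (Fin N) := {y | y ∈ S i}
  have hT : ∀ i, a i ≤ #(T i) := fun i => by
    simpa using card_le_card_of_leftInverse (fun x => by simpa [T] using (h1 i x).1)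
      fun x => (h1 i x).2
  have hT2 : ∀ p ∈ univ.filter (fun p : Fin ℓ × Fin ℓ => p.1 < p.2),
      #(T p.1 ∩ T p.2) ≤ a2 p.1 p.2 := fun p hp => by
    have hlt : p.1 < p.2 := (mem_filter.1 hp).2
    simpa using card_le_card_of_leftInvOn (s := T p.1 ∩ T p.2) (g := g2 _ _ hlt)
      fun y hy => by simp only [T, coe_inter, coe_filter_univ] at hy; exact h2 _ _ hlt y hy.1 hy.2
  have hU := card_le_card_of_leftInvOn (s := univ.biUnion T) (g := gt)
    fun y hy => h3 y (by simpa [T] using hy)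
  have hbonf := sum_card_le_card_biUnion_add_sum_card_inter univ T
  rw [univ_product_univ] at hbonf
  have hsumT := sum_le_sum fun i (_ : i ∈ univ) => hT i
  have hsumT2 := sum_le_sum hT2
  simp only [Fintype.card_fin] at hU
  omega

open Finset in
/-- **Totality of the Inclusion-Exclusion search problem.** Given sets
`S i ⊆ Fin N`, estimates `a i` for `|S i|` and `a2 i j` for `|S i ∩ S j|`
(`i < j`), a margin `e ≥ 1` with `∑ a i ≥ ∑_{i<j} a2 i j + e`, and
injection–surjection pairs certifying `a i ≤ |S i|`, `|S i ∩ S j| ≤ a2 i j`,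
and `|⋃ S i| ≤ m := ∑ a i − ∑_{i<j} a2 i j − e`, one of the certificates fails. -/
theorem inclusion_exclusion_total (N ℓ : ℕ) (hN : 1 ≤ N) (hℓ : 1 ≤ ℓ)
    (S : Fin ℓ → Set (Fin N))
    (a : Fin ℓ → ℕ) (a2 : Fin ℓ → Fin ℓ → ℕ) (e : ℕ) (he : 1 ≤ e)
    (hsum : (∑ p ∈ univ.filter (fun p : Fin ℓ × Fin ℓ => p.1 < p.2), a2 p.1 p.2) + e
              ≤ ∑ i : Fin ℓ, a i)
    (f1 : ∀ i : Fin ℓ, Fin (a i) → Fin N)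
    (g1 : ∀ i : Fin ℓ, Fin N → Fin (a i))
    (f2 : ∀ i j : Fin ℓ, i < j → Fin (a2 i j) → Fin N)
    (g2 : ∀ i j : Fin ℓ, i < j → Fin N → Fin (a2 i j))
    (ft : Fin ((∑ i : Fin ℓ, a i) -
            (∑ p ∈ univ.filter (fun p : Fin ℓ × Fin ℓ => p.1 < p.2), a2 p.1 p.2) - e)
          → Fin N)
    (gt : Fin N →
          Fin ((∑ i : Fin ℓ, a i) -
            (∑ p ∈ univ.filter (fun p : Fin ℓ × Fin ℓ => p.1 < p.2), a2 p.1 p.2) - e)) :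
    (∃ i : Fin ℓ, ∃ x : Fin (a i), f1 i x ∉ S i ∨ g1 i (f1 i x) ≠ x) ∨
    (∃ i j : Fin ℓ, ∃ hij : i < j, ∃ y : Fin N,
        y ∈ S i ∧ y ∈ S j ∧ f2 i j hij (g2 i j hij y) ≠ y) ∨
    (∃ y : Fin N, (∃ i : Fin ℓ, y ∈ S i) ∧ ft (gt y) ≠ y) :=
  inclusion_exclusion_total_general N ℓ S a a2 e he hsum f1 g1 f2 g2 ft gt
end

section
/- Let U be a finite set with |U| ≥ 2, let ≺ be a binary relation on U such that for all x ≠ y exactly one of x ≺ y and y ≺ x holds and such that x ⊀ x for all x, and let med : U × U → U be an arbitrary function. Then either there exist x, y, z ∈ U with x ≺ y, y ≺ z, and z ≺ x, or there exist x, y ∈ U with x ≺ y such that med(x, y) fails to lie strictly between x and y, i.e., ¬(x ≺ med(x, y) and med(x, y) ≺ y). (Totality of the Dense-Linear-Ordering search problem.) -/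
/-!
If there is no directed 3-cycle, the tournament `≺` is a strict linear order. A finite strict
order is well-founded, so for any `a ≺ b` there is a `≺`-minimal `c` above `a`; then `a ≺ c`
and nothing lies strictly between `a` and `c`, in particular not `med (a, c)`.
-/

theorem exists_covering_rel_of_finite {α : Type*} [Finite α] (r : α → α → Prop) [IsTrans α r]
    [Std.Irrefl r] {a b : α} (hab : r a b) : ∃ c, r a c ∧ ∀ d, r a d → ¬ r d c :=
  (Finite.wellFounded_of_trans_of_irrefl r).has_min {d | r a d} ⟨b, hab⟩

section Tournament

variable {U : Type*} {r : U → U → Prop}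
  (htotal : ∀ x y : U, x ≠ y → Xor (r x y) (r y x))
  (hcyc : ∀ x y z : U, r x y → r y z → ¬ r z x)

include hcyc in
theorem irrefl_of_forall_not_cycle (x : U) : ¬ r x x := fun h => hcyc x x x h h h

include htotal hcyc in
theorem trans_of_forall_not_cycle {x y z : U} (hxy : r x y) (hyz : r y z) : r x z := by
  by_cases hxz : x = z
  · subst hxz
    have hne : x ≠ y := by
      rintro rfl
      exact irrefl_of_forall_not_cycle hcyc x hxy
    exact (((xor_iff_or_and_not_and _ _).1 (htotal x y hne)).2 ⟨hxy, hyz⟩).elim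
  · exact (htotal x z hxz).or.resolve_right (hcyc x y z hxy hyz)

include htotal hcyc in
theorem isStrictOrder_of_forall_not_cycle : IsStrictOrder U r where
  irrefl := irrefl_of_forall_not_cycle hcyc
  trans _ _ _ := trans_of_forall_not_cycle htotal hcyc

include htotal in
theorem exists_rel_of_one_lt_card [Fintype U] (hU : 1 < Fintype.card U) : ∃ x y, r x y := by
  obtain ⟨a, b, hab⟩ := Fintype.exists_pair_of_one_lt_card hU
  rcases (htotal a b hab).or with h | h
  exacts [⟨a, b, h⟩, ⟨b, a, h⟩]

end Tournament

theorem dlo_total_general {U : Type*} [Fintype U] (hU : 2 ≤ Fintype.card U)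
    (prec : U → U → Prop)
    (htotal : ∀ x y : U, x ≠ y → Xor' (prec x y) (prec y x))
    (med : U × U → U) :
    (∃ x y z : U, prec x y ∧ prec y z ∧ prec z x) ∨
    (∃ x y : U, prec x y ∧ ¬ (prec x (med (x, y)) ∧ prec (med (x, y)) y)) := by
  by_contra h
  push Not at h
  obtain ⟨hcyc, hmed⟩ := h
  have := isStrictOrder_of_forall_not_cycle htotal hcyc
  obtain ⟨a, b, hab⟩ := exists_rel_of_one_lt_card htotal hU
  obtain ⟨c, hac, hcover⟩ := exists_covering_rel_of_finite prec hab
  exact hcover _ (hmed a c hac).1 (hmed a c hac).2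

/-- **Totality of the Dense-Linear-Ordering search problem.** Let `U` be a finite
set with at least two elements, `≺` a tournament (irreflexive, and for distinct
`x, y` exactly one of `x ≺ y`, `y ≺ x` holds), and `med : U × U → U` arbitrary.
Then there is a transitivity violation (a directed 3-cycle), or a pair `x ≺ y`
whose median is not strictly between `x` and `y`. -/
theorem dlo_total {U : Type*} [Fintype U] (hU : 2 ≤ Fintype.card U)
    (prec : U → U → Prop)
    (hirr : ∀ x : U, ¬ prec x x)
    (htotal : ∀ x y : U, x ≠ y → Xor' (prec x y) (prec y x))
    (med : U × U → U) :
    (∃ x y z : U, prec x y ∧ prec y z ∧ prec z x) ∨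
    (∃ x y : U, prec x y ∧ ¬ (prec x (med (x, y)) ∧ prec (med (x, y)) y)) :=
  dlo_total_general hU prec htotal med
end

section
/- Let V be a set with a distinguished element r, let F, L, R : V → V, and let H : V → ℕ. Suppose some v ∈ V satisfies at least one of: (i) v = r and L(r) = r; (ii) L(v) ≠ v and L(L(v)) = L(v); (iii) L(v) ≠ v and H(L(v)) ≤ H(v). Then the Empty-Child-with-Height instance (V, r, F, L, R, H) has a solution: either L(r) = r or R(r) = r or F(r) ≠ r (wrong root), or some u ∈ {v, L(v)} has an empty child (F(L(u)) ≠ u, or F(R(u)) ≠ u, or L(u) = R(u) with L(u) ≠ u), or there exists u ≠ r with u ≠ F(u) and H(u) ≠ H(F(u)) + 1, or H(r) ≠ 1 (wrong height). -/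
/-- **Core casework of the lemma that Empty-Child-with-Height is in PLS.**
If `v` is a solution of the Sink-of-DAG instance with successor `L` and potential
`H` — i.e. (i) `v = r` with `L r = r`, or (ii) `L v ≠ v` and `L (L v) = L v`, or
(iii) `L v ≠ v` and `H (L v) ≤ H v` — then the Empty-Child-with-Height instance
`(V, r, F, L, R, H)` has a solution: a wrong root, an empty child at `v` or `L v`,
a wrong height at some `u ≠ r`, or a wrong height at the root. -/
theorem emptyChildWithHeight_in_PLS {V : Type*} (r : V) (F L R : V → V)
    (H : V → ℕ) (v : V)
    (hv : (v = r ∧ L r = r) ∨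
          (L v ≠ v ∧ L (L v) = L v) ∨
          (L v ≠ v ∧ H (L v) ≤ H v)) :
    (L r = r ∨ R r = r ∨ F r ≠ r) ∨
    (∃ u : V, (u = v ∨ u = L v) ∧
        (F (L u) ≠ u ∨ F (R u) ≠ u ∨ (L u = R u ∧ L u ≠ u))) ∨
    (∃ u : V, u ≠ r ∧ u ≠ F u ∧ H u ≠ H (F u) + 1) ∨
    H r ≠ 1 := by
  obtain hpar | hpar := ne_or_eq (F (L v)) v
  · exact .inr (.inl ⟨v, .inl rfl, .inl hpar⟩)
  rcases hv with ⟨-, hLr⟩ | ⟨hne, hfix⟩ | ⟨hne, hle⟩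
  · exact .inl (.inl hLr)
  · refine .inr (.inl ⟨L v, .inr rfl, .inl ?_⟩)
    rw [hfix, hpar]
    exact hne.symm
  · -- `L v` has parent `v ≠ L v`, so it is either a root with `F r ≠ r`
    -- or a non-root whose height should be `H v + 1 > H (L v)`.
    by_cases hroot : L v = r
    · refine .inl (.inr (.inr ?_))
      rw [← hroot, hpar]
      exact hne.symm
    · refine .inr (.inr (.inl ⟨L v, hroot, ?_, ?_⟩)) <;> rw [hpar]
      · exact hne
      · omega
end
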